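/- For a source program e using simple contracts with P distinct predicates, every term e' reachable from e by the space-efficient reduction (maintaining the irredundancy invariant on all predicate stacks) has the property that every predicate stack occurring in e' has length at most P. -/
import Mathlib


/-! Contract PCF with both classic monitors `mon^l(C,e)` and
    space-efficient labeled-contract monitors `mon(c,e)`.
    Predicate contracts carry explicit delayed closing substitutions. -/

inductive Ty where
  | bool | int
  | arrow : Ty → Ty → Ty
deriving DecidableEq

inductive Const where
  | int : Int → Const
  | bool : Bool → Const
deriving DecidableEq

def Const.ty : Const → Ty
  | .int _ => .int
  | .bool _ => .bool

def Ty.IsBase : Ty → Prop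
  | .bool => True
  | .int => True
  | .arrow _ _ => False

abbrev Label := String
abbrev Vr := String

mutual
/-- Terms. -/
inductive Tm where
  | var : Vr → Tm
  | const : Const → Tm
  | lam : Vr → Ty → Tm → Tm
  | app : Tm → Tm → Tm
  | fix : Vr → Ty → Tm → Tm
  | ite : Tm → Tm → Tm → Tm
  | err : Label → Tm
  | mon : Label → Ctr → Tm → Tm
  | monL : LCtr → Tm → Tm
/-- Contracts: predicate contracts with a delayed closing substitution,
    and dependent function contracts. -/
inductive Ctr where
  | pred : Env → Tm → Ctr
  | fn : Vr → Ctr → Ctr → Ctr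
/-- Delayed closing substitutions (environments). -/
inductive Env where
  | id : Env
  | cons : Vr → Tm → Env → Env
/-- Labeled contracts: predicate stacks (`nil` / `pcons`) of labeled
    predicates, and function contracts. -/
inductive LCtr where
  | nil : LCtr
  | pcons : Label → Env → Tm → LCtr → LCtr
  | fn : Vr → LCtr → LCtr → LCtr
end

mutual
/-- Free variables of a term. -/
def Tm.fv : Tm → List Vr
  | .var x => [x]
  | .const _ => []
  | .lam x _ e => e.fv.filter (· ≠ x)
  | .app e₁ e₂ => e₁.fv ++ e₂.fv
  | .fix x _ e => e.fv.filter (· ≠ x)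
  | .ite e₁ e₂ e₃ => e₁.fv ++ e₂.fv ++ e₃.fv
  | .err _ => []
  | .mon _ C e => C.fv ++ e.fv
  | .monL c e => c.fv ++ e.fv
/-- Free variables of a contract. -/
def Ctr.fv : Ctr → List Vr
  | .pred σ e => fvClose σ e.fv
  | .fn x C₁ C₂ => C₁.fv ++ C₂.fv.filter (· ≠ x)
/-- `fvClose σ xs`: free variables of a term with free variables `xs`
    after closing up with `σ`. -/
def fvClose : Env → List Vr → List Vr
  | .id, xs => xs
  | .cons y v σ, xs =>
      fvClose σ (xs.filter (· ≠ y)) ++ (if y ∈ xs then v.fv else [])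
/-- Free variables of a labeled contract. -/
def LCtr.fv : LCtr → List Vr
  | .nil => []
  | .pcons _ σ e r => fvClose σ e.fv ++ r.fv
  | .fn x c₁ c₂ => c₁.fv ++ c₂.fv.filter (· ≠ x)
end

mutual
/-- Substitution of a closed value for a variable. -/
def Tm.subst (x : Vr) (v : Tm) : Tm → Tm
  | .var y => if y = x then v else .var y
  | .const k => .const k
  | .lam y T e => if y = x then .lam y T e else .lam y T (Tm.subst x v e)
  | .app e₁ e₂ => .app (Tm.subst x v e₁) (Tm.subst x v e₂)
  | .fix y T e => if y = x then .fix y T e else .fix y T (Tm.subst x v e)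
  | .ite e₁ e₂ e₃ => .ite (Tm.subst x v e₁) (Tm.subst x v e₂) (Tm.subst x v e₃)
  | .err l => .err l
  | .mon l C e => .mon l (Ctr.subst x v C) (Tm.subst x v e)
  | .monL c e => .monL (LCtr.subst x v c) (Tm.subst x v e)
/-- Substitution into contracts: delayed into the closing substitution of a
    predicate contract, and only recorded when the variable occurs free. -/
def Ctr.subst (x : Vr) (v : Tm) : Ctr → Ctr
  | .pred σ e => if x ∈ fvClose σ e.fv then .pred (.cons x v σ) e else .pred σ e
  | .fn y C₁ C₂ =>
      if y = x then .fn y (Ctr.subst x v C₁) C₂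
      else .fn y (Ctr.subst x v C₁) (Ctr.subst x v C₂)
/-- Substitution into labeled contracts. -/
def LCtr.subst (x : Vr) (v : Tm) : LCtr → LCtr
  | .nil => .nil
  | .pcons l σ e r =>
      if x ∈ fvClose σ e.fv then .pcons l (.cons x v σ) e (LCtr.subst x v r)
      else .pcons l σ e (LCtr.subst x v r)
  | .fn y c₁ c₂ =>
      if y = x then .fn y (LCtr.subst x v c₁) c₂
      else .fn y (LCtr.subst x v c₁) (LCtr.subst x v c₂)
end

/-- Apply a delayed closing substitution to a term. -/
def Env.apply : Env → Tm → Tm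
  | .id, e => e
  | .cons x v σ, e => σ.apply (Tm.subst x v e)

/-- Lookup in a closing substitution. -/
def Env.lookup : Env → Vr → Option Tm
  | .id, _ => none
  | .cons y v σ, x => if x = y then some v else σ.lookup x

/-- Labeling an ordinary contract, producing a labeled contract. -/
def Ctr.label (l : Label) : Ctr → LCtr
  | .pred σ e => .pcons l σ e .nil
  | .fn x C₁ C₂ => .fn x (C₁.label l) (C₂.label l)

/-- Classic values: constants, lambdas, and (classic) function proxies. -/
inductive Value : Tm → Prop where
  | const {k} : Value (.const k)
  | lam {x T e} : Value (.lam x T e)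
  | proxy {l x C₁ C₂ v} : Value v → Value (.mon l (.fn x C₁ C₂) v)

/-- Space-efficient values: constants, lambdas, and labeled function
    proxies (at most one proxy per function). -/
inductive ValueE : Tm → Prop where
  | const {k} : ValueE (.const k)
  | lam {x T e} : ValueE (.lam x T e)
  | proxy {x c₁ c₂ y T e} : ValueE (.monL (.fn x c₁ c₂) (.lam y T e))

section Join
variable (imp : Env → Tm → Env → Tm → Prop)

mutual
/-- `Drop r σ e r'`: removing from the stack `r` every labeled predicate
    implied by `pred_σ(e)` yields `r'`. -/
inductive Drop : LCtr → Env → Tm → LCtr → Prop where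
  | nil {σ e} : Drop .nil σ e .nil
  | impl {l σ₁ e₁ σ₂ e₂ r r'} : imp σ₁ e₁ σ₂ e₂ →
      Drop r σ₂ e₂ r' → Drop (.pcons l σ₂ e₂ r) σ₁ e₁ r'
  | nimpl {l σ₁ e₁ σ₂ e₂ r r'} : ¬ imp σ₁ e₁ σ₂ e₂ →
      Drop r σ₁ e₁ r' → Drop (.pcons l σ₂ e₂ r) σ₁ e₁ (.pcons l σ₂ e₂ r')
/-- `Join c₁ c₂ c₃`: joining the labeled contracts `c₁` and `c₂`
    (eliminating redundant checks) yields `c₃`. -/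
inductive Join : LCtr → LCtr → LCtr → Prop where
  | nil {r₂} : Join .nil r₂ r₂
  | pcons {l σ e r₁ r₂ r₃ r₄} : Join r₁ r₂ r₃ → Drop r₃ σ e r₄ →
      Join (.pcons l σ e r₁) r₂ (.pcons l σ e r₄)
  | fn {x c₁₁ c₁₂ c₂₁ c₂₂ d₁ w d₂} : Join c₂₁ c₁₁ d₁ →
      Wrap c₁₂ x c₂₂ w → Join w c₂₂ d₂ →
      Join (.fn x c₁₁ c₁₂) (.fn x c₂₁ c₂₂) (.fn x d₁ d₂)
/-- `Wrap c₀ x c c₀'`: forcing the pending substitution of a monitor of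
    `c` for `x` into the labeled contract `c₀` yields `c₀'`. -/
inductive Wrap : LCtr → Vr → LCtr → LCtr → Prop where
  | nil {x c} : Wrap .nil x c .nil
  | skip {l σ e r x c r'} : x ∉ fvClose σ e.fv →
      Wrap r x c r' → Wrap (.pcons l σ e r) x c (.pcons l σ e r')
  | joinMon {l σ e r x c c' e' c'' r'} : x ∈ fvClose σ e.fv →
      σ.lookup x = some (.monL c' e') → Join c' c c'' →
      Wrap r x c r' →
      Wrap (.pcons l σ e r) x c (.pcons l (.cons x (.monL c'' e') σ) e r')
  | monOther {l σ e r x c v r'} : x ∈ fvClose σ e.fv →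
      (σ.lookup x).getD (.var x) = v → (∀ c' e', v ≠ .monL c' e') →
      Wrap r x c r' →
      Wrap (.pcons l σ e r) x c (.pcons l (.cons x (.monL c v) σ) e r')
  | fn {c₁ c₂ x c c₁' c₂' y} : Wrap c₁ x c c₁' → Wrap c₂ x c c₂' →
      Wrap (.fn y c₁ c₂) x c (.fn y c₁' c₂')
end

/-- Small-step reduction for space-efficient CPCF, parameterized by the
    predicate implication relation `imp`. -/
inductive StepE : Tm → Tm → Prop where
  | beta {x T e v} : ValueE v → StepE (.app (.lam x T e) v) (Tm.subst x v e)
  | fix {x T e} : StepE (.fix x T e) (Tm.subst x (.fix x T e) e)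
  | iteTrue {e₂ e₃} : StepE (.ite (.const (.bool true)) e₂ e₃) e₂
  | iteFalse {e₂ e₃} : StepE (.ite (.const (.bool false)) e₂ e₃) e₃
  | appL {e₁ e₁' e₂} : StepE e₁ e₁' → StepE (.app e₁ e₂) (.app e₁' e₂)
  | appR {v e₂ e₂'} : ValueE v → StepE e₂ e₂' → StepE (.app v e₂) (.app v e₂')
  | ite {e₁ e₁' e₂ e₃} : StepE e₁ e₁' → StepE (.ite e₁ e₂ e₃) (.ite e₁' e₂ e₃)
  | appLRaise {l e₂} : StepE (.app (.err l) e₂) (.err l)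
  | appRRaise {v l} : ValueE v → StepE (.app v (.err l)) (.err l)
  | iteRaise {l e₂ e₃} : StepE (.ite (.err l) e₂ e₃) (.err l)
  | monLabel {l C e} : StepE (.mon l C e) (.monL (C.label l) e)
  | monCNil {v} : ValueE v → StepE (.monL .nil v) v
  | monCPred {l σ e r v} : ValueE v →
      StepE (.monL (.pcons l σ e r) v)
            (.ite (.app (σ.apply e) v) (.monL r v) (.err l))
  | monCApp {x c₁ c₂ v₁ v₂} : ValueE v₁ → ValueE v₂ →
      StepE (.app (.monL (.fn x c₁ c₂) v₁) v₂)
            (.monL (LCtr.subst x v₂ c₂) (.app v₁ (.monL c₁ v₂)))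
  | monC {c e e'} : (∀ c' e'', e ≠ .monL c' e'') → StepE e e' →
      StepE (.monL c e) (.monL c e')
  | monCJoin {c₁ c₂ c₃ e} : Join imp c₁ c₂ c₃ →
      StepE (.monL c₂ (.monL c₁ e)) (.monL c₃ e)
  | monCRaise {c l} : StepE (.monL c (.err l)) (.err l)

end Join

/-- Typing contexts. -/
abbrev Ctx := List (Vr × Ty)

mutual
/-- Typing of terms. -/
inductive HasTy : Ctx → Tm → Ty → Prop where
  | var {Γ x T} : List.lookup x Γ = some T → HasTy Γ (.var x) T
  | const {Γ k} : HasTy Γ (.const k) k.ty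
  | lam {Γ x T₁ e T₂} : HasTy ((x, T₁) :: Γ) e T₂ →
      HasTy Γ (.lam x T₁ e) (.arrow T₁ T₂)
  | app {Γ e₁ e₂ T₁ T₂} : HasTy Γ e₁ (.arrow T₁ T₂) → HasTy Γ e₂ T₁ →
      HasTy Γ (.app e₁ e₂) T₂
  | fix {Γ x T e} : HasTy ((x, T) :: Γ) e T → HasTy Γ (.fix x T e) T
  | ite {Γ e₁ e₂ e₃ T} : HasTy Γ e₁ .bool → HasTy Γ e₂ T → HasTy Γ e₃ T →
      HasTy Γ (.ite e₁ e₂ e₃) T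
  | err {Γ l T} : HasTy Γ (.err l) T
  | mon {Γ l C e T} : CtrTy Γ C T → HasTy Γ e T → HasTy Γ (.mon l C e) T
  | monL {Γ c e T} : LCtrTy Γ c T → HasTy Γ e T → HasTy Γ (.monL c e) T
/-- Typing of contracts. -/
inductive CtrTy : Ctx → Ctr → Ty → Prop where
  | pred {Γ Γ' σ e B} : B.IsBase → EnvTy Γ' σ →
      HasTy (Γ' ++ Γ) e (.arrow B .bool) → CtrTy Γ (.pred σ e) B
  | fn {Γ x C₁ C₂ T₁ T₂} : CtrTy Γ C₁ T₁ → CtrTy ((x, T₁) :: Γ) C₂ T₂ →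
      CtrTy Γ (.fn x C₁ C₂) (.arrow T₁ T₂)
/-- Typing of labeled contracts. -/
inductive LCtrTy : Ctx → LCtr → Ty → Prop where
  | nil {Γ B} : Ty.IsBase B → LCtrTy Γ .nil B
  | pcons {Γ Γ' l σ e r B} : B.IsBase → EnvTy Γ' σ →
      HasTy (Γ' ++ Γ) e (.arrow B .bool) → LCtrTy Γ r B →
      LCtrTy Γ (.pcons l σ e r) B
  | fn {Γ x c₁ c₂ T₁ T₂} : LCtrTy Γ c₁ T₁ → LCtrTy ((x, T₁) :: Γ) c₂ T₂ →
      LCtrTy Γ (.fn x c₁ c₂) (.arrow T₁ T₂)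
/-- Well-formed closing substitutions: each variable of the context is
    mapped to a closed value of the declared type. -/
inductive EnvTy : Ctx → Env → Prop where
  | id : EnvTy [] .id
  | cons {Γ x v T σ} : ValueE v → HasTy [] v T → EnvTy Γ σ →
      EnvTy ((x, T) :: Γ) (.cons x v σ)
end

/-- Small-step reduction for classic CPCF (over the shared syntax). -/
inductive StepC : Tm → Tm → Prop where
  | beta {x T e v} : Value v → StepC (.app (.lam x T e) v) (Tm.subst x v e)
  | fix {x T e} : StepC (.fix x T e) (Tm.subst x (.fix x T e) e)
  | iteTrue {e₂ e₃} : StepC (.ite (.const (.bool true)) e₂ e₃) e₂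
  | iteFalse {e₂ e₃} : StepC (.ite (.const (.bool false)) e₂ e₃) e₃
  | appL {e₁ e₁' e₂} : StepC e₁ e₁' → StepC (.app e₁ e₂) (.app e₁' e₂)
  | appR {v e₂ e₂'} : Value v → StepC e₂ e₂' → StepC (.app v e₂) (.app v e₂')
  | ite {e₁ e₁' e₂ e₃} : StepC e₁ e₁' → StepC (.ite e₁ e₂ e₃) (.ite e₁' e₂ e₃)
  | appLRaise {l e₂} : StepC (.app (.err l) e₂) (.err l)
  | appRRaise {v l} : Value v → StepC (.app v (.err l)) (.err l)
  | iteRaise {l e₂ e₃} : StepC (.ite (.err l) e₂ e₃) (.err l)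
  | monPred {l σ e v} : Value v →
      StepC (.mon l (.pred σ e) v) (.ite (.app (σ.apply e) v) v (.err l))
  | monApp {l x C₁ C₂ v₁ v₂} : Value v₁ → Value v₂ →
      StepC (.app (.mon l (.fn x C₁ C₂) v₁) v₂)
            (.mon l (Ctr.subst x v₂ C₂) (.app v₁ (.mon l C₁ v₂)))
  | mon {l C e e'} : StepC e e' → StepC (.mon l C e) (.mon l C e')
  | monRaise {l C l'} : StepC (.mon l C (.err l')) (.err l)

mutual
/-- The set of predicates (paired with their closing substitutions)
    occurring in a term. -/
def Tm.preds : Tm → Set (Env × Tm)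
  | .var _ => ∅
  | .const _ => ∅
  | .lam _ _ e => e.preds
  | .app e₁ e₂ => e₁.preds ∪ e₂.preds
  | .fix _ _ e => e.preds
  | .ite e₁ e₂ e₃ => e₁.preds ∪ e₂.preds ∪ e₃.preds
  | .err _ => ∅
  | .mon _ C e => C.preds ∪ e.preds
  | .monL c e => c.preds ∪ e.preds
def Ctr.preds : Ctr → Set (Env × Tm)
  | .pred σ e => {(σ, e)} ∪ e.preds ∪ σ.preds
  | .fn _ C₁ C₂ => C₁.preds ∪ C₂.preds
def Env.preds : Env → Set (Env × Tm)
  | .id => ∅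
  | .cons _ v σ => v.preds ∪ σ.preds
def LCtr.preds : LCtr → Set (Env × Tm)
  | .nil => ∅
  | .pcons _ σ e r => {(σ, e)} ∪ e.preds ∪ σ.preds ∪ r.preds
  | .fn _ c₁ c₂ => c₁.preds ∪ c₂.preds
end

/-- A program uses simple contracts when every predicate occurring in it
    is closed and has the identity closing substitution. -/
def Simple (e : Tm) : Prop :=
  ∀ p ∈ e.preds, p.1 = Env.id ∧ Tm.fv p.2 = []

/-- The list of labeled predicates of a predicate stack. -/
def LCtr.stackList : LCtr → List (Label × Env × Tm)
  | .nil => []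
  | .pcons l σ e r => (l, σ, e) :: r.stackList
  | .fn _ _ _ => []

mutual
/-- The set of predicate stacks occurring in a term. -/
def Tm.stacks : Tm → Set (List (Label × Env × Tm))
  | .var _ => ∅
  | .const _ => ∅
  | .lam _ _ e => e.stacks
  | .app e₁ e₂ => e₁.stacks ∪ e₂.stacks
  | .fix _ _ e => e.stacks
  | .ite e₁ e₂ e₃ => e₁.stacks ∪ e₂.stacks ∪ e₃.stacks
  | .err _ => ∅
  | .mon _ C e => C.stacks ∪ e.stacks
  | .monL c e => c.stacks ∪ e.stacks
def Ctr.stacks : Ctr → Set (List (Label × Env × Tm))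
  | .pred σ e => σ.stacks ∪ e.stacks
  | .fn _ C₁ C₂ => C₁.stacks ∪ C₂.stacks
def Env.stacks : Env → Set (List (Label × Env × Tm))
  | .id => ∅
  | .cons _ v σ => v.stacks ∪ σ.stacks
def LCtr.stacks : LCtr → Set (List (Label × Env × Tm))
  | .nil => {[]}
  | .pcons l σ e r =>
      {LCtr.stackList (.pcons l σ e r)} ∪ σ.stacks ∪ e.stacks ∪ r.stacks
  | .fn _ c₁ c₂ => c₁.stacks ∪ c₂.stacks
end

/-- Syntactic equality as the predicate implication relation. -/
def EqImp (σ₁ : Env) (e₁ : Tm) (σ₂ : Env) (e₂ : Tm) : Prop :=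
  σ₁ = σ₂ ∧ e₁ = e₂

/-! ### Auxiliary lemmas -/
set_option maxHeartbeats 1000000

abbrev pr : Label × Env × Tm → Env × Tm := fun t => (t.2.1, t.2.2)

/-- Simplicity condition on a set of (closing substitution, predicate) pairs. -/
def SimpleP (S : Set (Env × Tm)) : Prop := ∀ p ∈ S, p.1 = Env.id ∧ Tm.fv p.2 = []

lemma SimpleP.mono {S S' : Set (Env × Tm)} (h : SimpleP S') (hsub : S ⊆ S') : SimpleP S :=
  fun p hp => h p (hsub hp)

lemma fvClose_id (xs : List Vr) : fvClose .id xs = xs := rfl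

lemma fvClose_simple {σ : Env} {e : Tm} (h : σ = Env.id ∧ Tm.fv e = []) :
    fvClose σ e.fv = [] := by
  rcases h with ⟨h1, h2⟩; subst h1; rw [fvClose_id, h2]

mutual
theorem ctr_subst_id (x : Vr) (v : Tm) (C : Ctr) (h : SimpleP C.preds) :
    Ctr.subst x v C = C := by
  match C with
  | .pred σ e =>
      have hm : (σ, e) ∈ Ctr.preds (.pred σ e) := by
        simp [Ctr.preds]
      have := fvClose_simple (h _ hm)
      simp [Ctr.subst, this]
  | .fn y C₁ C₂ =>
      have h₁ : SimpleP C₁.preds := h.mono (by intro p hp; simp [Ctr.preds]; tauto)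
      have h₂ : SimpleP C₂.preds := h.mono (by intro p hp; simp [Ctr.preds]; tauto)
      unfold Ctr.subst
      rw [ctr_subst_id x v C₁ h₁, ctr_subst_id x v C₂ h₂]
      split <;> rfl

theorem lctr_subst_id (x : Vr) (v : Tm) (c : LCtr) (h : SimpleP c.preds) :
    LCtr.subst x v c = c := by
  match c with
  | .nil => rfl
  | .pcons l σ e r =>
      have hm : (σ, e) ∈ LCtr.preds (.pcons l σ e r) := by
        simp [LCtr.preds]
      have hr : SimpleP r.preds := h.mono (by intro p hp; simp [LCtr.preds]; tauto)
      have := fvClose_simple (h _ hm)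
      simp [LCtr.subst, this, lctr_subst_id x v r hr]
  | .fn y c₁ c₂ =>
      have h₁ : SimpleP c₁.preds := h.mono (by intro p hp; simp [LCtr.preds]; tauto)
      have h₂ : SimpleP c₂.preds := h.mono (by intro p hp; simp [LCtr.preds]; tauto)
      unfold LCtr.subst
      rw [lctr_subst_id x v c₁ h₁, lctr_subst_id x v c₂ h₂]
      split <;> rfl
end

theorem tm_subst_preds (x : Vr) (v : Tm) (t : Tm) (h : SimpleP t.preds) :
    Tm.preds (Tm.subst x v t) ⊆ t.preds ∪ v.preds := by
  match t with
  | .var y => by_cases hy : y = x <;> simp [Tm.subst, hy, Tm.preds]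
  | .const k => simp [Tm.subst, Tm.preds]
  | .lam y T e =>
      have he := tm_subst_preds x v e (h.mono (by simp [Tm.preds]))
      by_cases hy : y = x <;> simp [Tm.subst, hy, Tm.preds] <;> first | exact he | simp
  | .app e₁ e₂ =>
      have h₁ := tm_subst_preds x v e₁ (h.mono (by intro p hp; simp [Tm.preds]; tauto))
      have h₂ := tm_subst_preds x v e₂ (h.mono (by intro p hp; simp [Tm.preds]; tauto))
      simp only [Tm.subst, Tm.preds]
      intro p hp
      rcases hp with hp | hp
      · rcases h₁ hp with hp | hp <;> simp_all
      · rcases h₂ hp with hp | hp <;> simp_all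
  | .fix y T e =>
      have he := tm_subst_preds x v e (h.mono (by simp [Tm.preds]))
      by_cases hy : y = x <;> simp [Tm.subst, hy, Tm.preds] <;> first | exact he | simp
  | .ite e₁ e₂ e₃ =>
      have h₁ := tm_subst_preds x v e₁ (h.mono (by intro p hp; simp [Tm.preds]; tauto))
      have h₂ := tm_subst_preds x v e₂ (h.mono (by intro p hp; simp [Tm.preds]; tauto))
      have h₃ := tm_subst_preds x v e₃ (h.mono (by intro p hp; simp [Tm.preds]; tauto))
      simp only [Tm.subst, Tm.preds]
      intro p hp
      rcases hp with (hp | hp) | hp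
      · rcases h₁ hp with hp | hp <;> simp_all
      · rcases h₂ hp with hp | hp <;> simp_all
      · rcases h₃ hp with hp | hp <;> simp_all
  | .err l => simp [Tm.subst, Tm.preds]
  | .mon l C e =>
      have hC : SimpleP C.preds := h.mono (by intro p hp; simp [Tm.preds]; tauto)
      have he := tm_subst_preds x v e (h.mono (by intro p hp; simp [Tm.preds]; tauto))
      simp only [Tm.subst, Tm.preds, ctr_subst_id x v C hC]
      intro p hp
      rcases hp with hp | hp
      · simp_all
      · rcases he hp with hp | hp <;> simp_all
  | .monL c e =>
      have hc : SimpleP c.preds := h.mono (by intro p hp; simp [Tm.preds]; tauto)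
      have he := tm_subst_preds x v e (h.mono (by intro p hp; simp [Tm.preds]; tauto))
      simp only [Tm.subst, Tm.preds, lctr_subst_id x v c hc]
      intro p hp
      rcases hp with hp | hp
      · simp_all
      · rcases he hp with hp | hp <;> simp_all

theorem tm_subst_stacks (x : Vr) (v : Tm) (t : Tm) (h : SimpleP t.preds) :
    Tm.stacks (Tm.subst x v t) ⊆ t.stacks ∪ v.stacks := by
  match t with
  | .var y => by_cases hy : y = x <;> simp [Tm.subst, hy, Tm.stacks]
  | .const k => simp [Tm.subst, Tm.stacks]
  | .lam y T e =>
      have he := tm_subst_stacks x v e (h.mono (by simp [Tm.preds]))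
      by_cases hy : y = x <;> simp only [Tm.subst, hy, if_true, if_false, Tm.stacks]
      · exact Set.subset_union_left
      · simpa using he
  | .app e₁ e₂ =>
      have h₁ := tm_subst_stacks x v e₁ (h.mono (by intro p hp; simp [Tm.preds]; tauto))
      have h₂ := tm_subst_stacks x v e₂ (h.mono (by intro p hp; simp [Tm.preds]; tauto))
      simp only [Tm.subst, Tm.stacks]
      intro p hp
      rcases hp with hp | hp
      · rcases h₁ hp with hp | hp <;> simp_all
      · rcases h₂ hp with hp | hp <;> simp_all
  | .fix y T e =>
      have he := tm_subst_stacks x v e (h.mono (by simp [Tm.preds]))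
      by_cases hy : y = x <;> simp only [Tm.subst, hy, if_true, if_false, Tm.stacks]
      · exact Set.subset_union_left
      · simpa using he
  | .ite e₁ e₂ e₃ =>
      have h₁ := tm_subst_stacks x v e₁ (h.mono (by intro p hp; simp [Tm.preds]; tauto))
      have h₂ := tm_subst_stacks x v e₂ (h.mono (by intro p hp; simp [Tm.preds]; tauto))
      have h₃ := tm_subst_stacks x v e₃ (h.mono (by intro p hp; simp [Tm.preds]; tauto))
      simp only [Tm.subst, Tm.stacks]
      intro p hp
      rcases hp with (hp | hp) | hp
      · rcases h₁ hp with hp | hp <;> simp_all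
      · rcases h₂ hp with hp | hp <;> simp_all
      · rcases h₃ hp with hp | hp <;> simp_all
  | .err l => simp [Tm.subst, Tm.stacks]
  | .mon l C e =>
      have hC : SimpleP C.preds := h.mono (by intro p hp; simp [Tm.preds]; tauto)
      have he := tm_subst_stacks x v e (h.mono (by intro p hp; simp [Tm.preds]; tauto))
      simp only [Tm.subst, Tm.stacks, ctr_subst_id x v C hC]
      intro p hp
      rcases hp with hp | hp
      · simp_all [Tm.stacks]
      · rcases he hp with hp | hp <;> simp_all [Tm.stacks]
  | .monL c e =>
      have hc : SimpleP c.preds := h.mono (by intro p hp; simp [Tm.preds]; tauto)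
      have he := tm_subst_stacks x v e (h.mono (by intro p hp; simp [Tm.preds]; tauto))
      simp only [Tm.subst, Tm.stacks, lctr_subst_id x v c hc]
      intro p hp
      rcases hp with hp | hp
      · simp_all [Tm.stacks]
      · rcases he hp with hp | hp <;> simp_all [Tm.stacks]

theorem lctr_stackList_preds (c : LCtr) :
    ∀ a ∈ c.stackList, (a.2.1, a.2.2) ∈ c.preds := by
  match c with
  | .nil => simp [LCtr.stackList]
  | .pcons l σ e r =>
      intro a ha
      simp only [LCtr.stackList, List.mem_cons] at ha
      rcases ha with rfl | ha
      · simp [LCtr.preds]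
      · have := lctr_stackList_preds r a ha
        simp [LCtr.preds]; tauto
  | .fn y c₁ c₂ => simp [LCtr.stackList]

mutual
theorem tm_stacks_preds (t : Tm) :
    ∀ s ∈ t.stacks, ∀ a ∈ s, (a.2.1, a.2.2) ∈ t.preds := by
  match t with
  | .var y => simp [Tm.stacks]
  | .const k => simp [Tm.stacks]
  | .err l => simp [Tm.stacks]
  | .lam y T e => exact tm_stacks_preds e
  | .fix y T e => exact tm_stacks_preds e
  | .app e₁ e₂ =>
      intro s hs a ha
      rcases hs with hs | hs
      · exact Or.inl (tm_stacks_preds e₁ s hs a ha)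
      · exact Or.inr (tm_stacks_preds e₂ s hs a ha)
  | .ite e₁ e₂ e₃ =>
      intro s hs a ha
      rcases hs with (hs | hs) | hs
      · exact Or.inl (Or.inl (tm_stacks_preds e₁ s hs a ha))
      · exact Or.inl (Or.inr (tm_stacks_preds e₂ s hs a ha))
      · exact Or.inr (tm_stacks_preds e₃ s hs a ha)
  | .mon l C e =>
      intro s hs a ha
      rcases hs with hs | hs
      · exact Or.inl (ctr_stacks_preds C s hs a ha)
      · exact Or.inr (tm_stacks_preds e s hs a ha)
  | .monL c e =>
      intro s hs a ha
      rcases hs with hs | hs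
      · exact Or.inl (lctr_stacks_preds c s hs a ha)
      · exact Or.inr (tm_stacks_preds e s hs a ha)

theorem ctr_stacks_preds (C : Ctr) :
    ∀ s ∈ C.stacks, ∀ a ∈ s, (a.2.1, a.2.2) ∈ C.preds := by
  match C with
  | .pred σ e =>
      intro s hs a ha
      rcases hs with hs | hs
      · have := env_stacks_preds σ s hs a ha
        simp [Ctr.preds]; tauto
      · have := tm_stacks_preds e s hs a ha
        simp [Ctr.preds]; tauto
  | .fn y C₁ C₂ =>
      intro s hs a ha
      rcases hs with hs | hs
      · exact Or.inl (ctr_stacks_preds C₁ s hs a ha)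
      · exact Or.inr (ctr_stacks_preds C₂ s hs a ha)

theorem env_stacks_preds (σ : Env) :
    ∀ s ∈ σ.stacks, ∀ a ∈ s, (a.2.1, a.2.2) ∈ σ.preds := by
  match σ with
  | .id => simp [Env.stacks]
  | .cons y v σ' =>
      intro s hs a ha
      rcases hs with hs | hs
      · exact Or.inl (tm_stacks_preds v s hs a ha)
      · exact Or.inr (env_stacks_preds σ' s hs a ha)

theorem lctr_stacks_preds (c : LCtr) :
    ∀ s ∈ c.stacks, ∀ a ∈ s, (a.2.1, a.2.2) ∈ c.preds := by
  match c with
  | .nil => intro s hs; simp only [LCtr.stacks, Set.mem_singleton_iff] at hs; simp [hs]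
  | .pcons l σ e r =>
      intro s hs a ha
      rcases hs with ((hs | hs) | hs) | hs
      · rw [Set.mem_singleton_iff] at hs
        subst hs
        exact lctr_stackList_preds _ a ha
      · have := env_stacks_preds σ s hs a ha
        simp [LCtr.preds]; tauto
      · have := tm_stacks_preds e s hs a ha
        simp [LCtr.preds]; tauto
      · have := lctr_stacks_preds r s hs a ha
        simp [LCtr.preds]; tauto
  | .fn y c₁ c₂ =>
      intro s hs a ha
      rcases hs with hs | hs
      · exact Or.inl (lctr_stacks_preds c₁ s hs a ha)
      · exact Or.inr (lctr_stacks_preds c₂ s hs a ha)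
end

theorem label_preds (l : Label) (C : Ctr) : (C.label l).preds = C.preds := by
  match C with
  | .pred σ e => simp [Ctr.label, LCtr.preds, Ctr.preds]
  | .fn y C₁ C₂ => simp [Ctr.label, LCtr.preds, Ctr.preds, label_preds l C₁, label_preds l C₂]

theorem label_stacks (l : Label) (C : Ctr) :
    ∀ s ∈ (C.label l).stacks, s ∈ C.stacks ∨ (s.map pr).Nodup := by
  match C with
  | .pred σ e =>
      intro s hs
      rcases hs with ((hs | hs) | hs) | hs
      · rw [Set.mem_singleton_iff] at hs; subst hs
        right; simp [LCtr.stackList]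
      · exact Or.inl (Or.inl hs)
      · exact Or.inl (Or.inr hs)
      · simp only [LCtr.stacks, Set.mem_singleton_iff] at hs; right; simp [hs]
  | .fn y C₁ C₂ =>
      intro s hs
      rcases hs with hs | hs
      · rcases label_stacks l C₁ s hs with h | h
        · exact Or.inl (Or.inl h)
        · exact Or.inr h
      · rcases label_stacks l C₂ s hs with h | h
        · exact Or.inl (Or.inr h)
        · exact Or.inr h

lemma env_apply_id (e : Tm) : Env.apply .id e = e := rfl

lemma stackList_nodup_of_stacks {c : LCtr}
    (h : ∀ s ∈ c.stacks, (s.map pr).Nodup) : (c.stackList.map pr).Nodup := by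
  match c with
  | .nil => simp [LCtr.stackList]
  | .pcons l σ e r => exact h _ (Or.inl (Or.inl (Or.inl rfl)))
  | .fn y c₁ c₂ => simp [LCtr.stackList]

/-- Induction motive for `Drop`. -/
def DropP (r : LCtr) (σ : Env) (e : Tm) (r' : LCtr) : Prop :=
  r'.preds ⊆ r.preds ∧
  (r'.stackList.map pr).Sublist (r.stackList.map pr) ∧
  (σ, e) ∉ r'.stackList.map pr ∧
  (∀ s ∈ r'.stacks, ∃ s0 ∈ r.stacks, (s.map pr).Sublist (s0.map pr))

/-- Induction motive for `Join`. -/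
def JoinP (c₁ c₂ c₃ : LCtr) : Prop :=
  SimpleP (c₁.preds ∪ c₂.preds) →
    c₃.preds ⊆ c₁.preds ∪ c₂.preds ∧
    ((c₁.stackList.map pr).Nodup → (c₂.stackList.map pr).Nodup →
      (c₃.stackList.map pr).Nodup) ∧
    ((∀ s ∈ c₁.stacks, (s.map pr).Nodup) → (∀ s ∈ c₂.stacks, (s.map pr).Nodup) →
      ∀ s ∈ c₃.stacks, (s.map pr).Nodup)

/-- Induction motive for `Wrap`. -/
def WrapP (c : LCtr) (_x : Vr) (_c0 c' : LCtr) : Prop :=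
  SimpleP c.preds → c' = c

lemma caseD1 {σ : Env} {e : Tm} : DropP .nil σ e .nil := by
  refine ⟨le_refl _, List.Sublist.refl _, by simp [LCtr.stackList], ?_⟩
  intro s hs
  exact ⟨s, hs, List.Sublist.refl _⟩

lemma caseD2 {l σ₁ e₁ σ₂ e₂ r r'} (h : EqImp σ₁ e₁ σ₂ e₂)
    (ih : DropP r σ₂ e₂ r') : DropP (.pcons l σ₂ e₂ r) σ₁ e₁ r' := by
  obtain ⟨rfl, rfl⟩ := h
  obtain ⟨ih1, ih2, ih3, ih4⟩ := ih
  refine ⟨?_, ?_, ih3, ?_⟩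
  · exact ih1.trans (by intro p hp; simp [LCtr.preds]; tauto)
  · exact ih2.trans (by simp [LCtr.stackList])
  · intro s hs
    obtain ⟨s0, hs0, hsub⟩ := ih4 s hs
    exact ⟨s0, Or.inr hs0, hsub⟩

lemma caseD3 {l σ₁ e₁ σ₂ e₂ r r'} (h : ¬ EqImp σ₁ e₁ σ₂ e₂)
    (ih : DropP r σ₁ e₁ r') :
    DropP (.pcons l σ₂ e₂ r) σ₁ e₁ (.pcons l σ₂ e₂ r') := by
  obtain ⟨ih1, ih2, ih3, ih4⟩ := ih
  refine ⟨?_, ?_, ?_, ?_⟩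
  · intro p hp
    simp only [LCtr.preds, Set.mem_union, Set.mem_singleton_iff] at hp ⊢
    rcases hp with ((hp | hp) | hp) | hp
    · tauto
    · tauto
    · tauto
    · have := ih1 hp; tauto
  · simp only [LCtr.stackList, List.map_cons]
    exact List.Sublist.cons₂ _ ih2
  · simp only [LCtr.stackList, List.map_cons, List.mem_cons]
    push_neg
    refine ⟨?_, ih3⟩
    intro hc
    exact h ⟨congrArg Prod.fst hc, congrArg Prod.snd hc⟩
  · intro s hs
    rcases hs with ((hs | hs) | hs) | hs
    · rw [Set.mem_singleton_iff] at hs; subst hs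
      refine ⟨LCtr.stackList (.pcons l σ₂ e₂ r), Or.inl (Or.inl (Or.inl rfl)), ?_⟩
      simp only [LCtr.stackList, List.map_cons]
      exact List.Sublist.cons₂ _ ih2
    · exact ⟨s, Or.inl (Or.inl (Or.inr hs)), List.Sublist.refl _⟩
    · exact ⟨s, Or.inl (Or.inr hs), List.Sublist.refl _⟩
    · obtain ⟨s0, hs0, hsub⟩ := ih4 s hs
      exact ⟨s0, Or.inr hs0, hsub⟩

lemma caseJ1 {r₂ : LCtr} : JoinP .nil r₂ r₂ := by
  intro _
  refine ⟨?_, fun _ h => h, fun _ h => h⟩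
  intro p hp; exact Or.inr hp

lemma caseJ2 {l σ e r₁ r₂ r₃ r₄}
    (ihJ : JoinP r₁ r₂ r₃) (ihD : DropP r₃ σ e r₄) :
    JoinP (.pcons l σ e r₁) r₂ (.pcons l σ e r₄) := by
  intro hS
  obtain ⟨ihD1, ihD2, ihD3, ihD4⟩ := ihD
  have hS' : SimpleP (r₁.preds ∪ r₂.preds) := by
    refine hS.mono ?_
    intro p hp
    rcases hp with hp | hp
    · exact Or.inl (by simp [LCtr.preds]; tauto)
    · exact Or.inr hp
  obtain ⟨j1, j3, j2⟩ := ihJ hS'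
  have hp₄ : r₄.preds ⊆ LCtr.preds (.pcons l σ e r₁) ∪ r₂.preds := by
    intro p hp
    rcases j1 (ihD1 hp) with hp | hp
    · exact Or.inl (by simp [LCtr.preds]; tauto)
    · exact Or.inr hp
  have key3 : (LCtr.stackList (.pcons l σ e r₁)).map pr |>.Nodup →
      (r₂.stackList.map pr).Nodup →
      ((LCtr.stackList (.pcons l σ e r₄)).map pr).Nodup := by
    intro h1 h2
    simp only [LCtr.stackList, List.map_cons, List.nodup_cons] at h1 ⊢
    refine ⟨ihD3, ?_⟩
    exact (ihD2.nodup (j3 h1.2 h2))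
  refine ⟨?_, key3, ?_⟩
  · intro p hp
    simp only [LCtr.preds, Set.mem_union, Set.mem_singleton_iff] at hp
    rcases hp with ((hp | hp) | hp) | hp
    · exact Or.inl (by simp [LCtr.preds]; tauto)
    · exact Or.inl (by simp [LCtr.preds]; tauto)
    · exact Or.inl (by simp [LCtr.preds]; tauto)
    · exact hp₄ hp
  · intro H1 H2 s hs
    have H1' : ∀ s ∈ r₁.stacks, (s.map pr).Nodup := by
      intro s hs; exact H1 s (Or.inr hs)
    rcases hs with ((hs | hs) | hs) | hs
    · rw [Set.mem_singleton_iff] at hs; subst hs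
      exact key3 (H1 _ (Or.inl (Or.inl (Or.inl rfl)))) (stackList_nodup_of_stacks H2)
    · exact H1 s (Or.inl (Or.inl (Or.inr hs)))
    · exact H1 s (Or.inl (Or.inr hs))
    · obtain ⟨s0, hs0, hsub⟩ := ihD4 s hs
      exact (List.Sublist.nodup hsub (j2 H1' H2 s0 hs0))

lemma caseJ3 {x c₁₁ c₁₂ c₂₁ c₂₂ d₁ w d₂}
    (hW : Wrap EqImp c₁₂ x c₂₂ w)
    (ih1 : JoinP c₂₁ c₁₁ d₁) (ihW : WrapP c₁₂ x c₂₂ w) (ih2 : JoinP w c₂₂ d₂) :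
    JoinP (.fn x c₁₁ c₁₂) (.fn x c₂₁ c₂₂) (.fn x d₁ d₂) := by
  intro hS
  have hw : w = c₁₂ := ihW (hS.mono (by intro p hp; left; simp [LCtr.preds]; tauto))
  subst hw
  have h1 := ih1 (hS.mono (by intro p hp; simp [LCtr.preds] at hp ⊢; tauto))
  have h2 := ih2 (hS.mono (by intro p hp; simp [LCtr.preds] at hp ⊢; tauto))
  refine ⟨?_, ?_, ?_⟩
  · intro p hp
    simp only [LCtr.preds, Set.mem_union, Set.mem_singleton_iff] at hp ⊢
    rcases hp with hp | hp
    · have := h1.1 hp; simp only [Set.mem_union] at this; tauto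
    · have := h2.1 hp; simp only [Set.mem_union] at this; tauto
  · intro _ _; simp [LCtr.stackList]
  · intro H1 H2 s hs
    rcases hs with hs | hs
    · exact h1.2.2 (fun s hs => H2 s (Or.inl hs)) (fun s hs => H1 s (Or.inl hs)) s hs
    · exact h2.2.2 (fun s hs => H1 s (Or.inr hs)) (fun s hs => H2 s (Or.inr hs)) s hs

lemma caseW1 {x : Vr} {c : LCtr} : WrapP .nil x c .nil := fun _ => rfl

lemma caseW2 {l σ e r x c r'} (hx : x ∉ fvClose σ e.fv)
    (ih : WrapP r x c r') : WrapP (.pcons l σ e r) x c (.pcons l σ e r') := by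
  intro hS
  rw [ih (hS.mono (by intro p hp; simp [LCtr.preds]; tauto))]

lemma caseW3 {l} {σ : Env} {e : Tm} {r : LCtr} {x : Vr} {c : LCtr} {e' : Tm} {c'' r' : LCtr}
    (hx : x ∈ fvClose σ e.fv) :
    WrapP (.pcons l σ e r) x c (.pcons l (.cons x (.monL c'' e') σ) e r') := by
  intro hS
  have hm : (σ, e) ∈ LCtr.preds (.pcons l σ e r) := by simp [LCtr.preds]
  rw [fvClose_simple (hS _ hm)] at hx
  simp at hx

lemma caseW5 {c₁ c₂ : LCtr} {x : Vr} {c c₁' c₂' : LCtr} {y : Vr}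
    (ih1 : WrapP c₁ x c c₁') (ih2 : WrapP c₂ x c c₂') :
    WrapP (.fn y c₁ c₂) x c (.fn y c₁' c₂') := by
  intro hS
  rw [ih1 (hS.mono (by intro p hp; simp [LCtr.preds]; tauto)),
      ih2 (hS.mono (by intro p hp; simp [LCtr.preds]; tauto))]

theorem join_main {c₁ c₂ c₃ : LCtr} (h : Join EqImp c₁ c₂ c₃) : JoinP c₁ c₂ c₃ := by
  refine Join.rec (motive_1 := fun r σ e r' _ => DropP r σ e r')
    (motive_2 := fun a b c _ => JoinP a b c)
    (motive_3 := fun a x b c _ => WrapP a x b c)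
    ?_ ?_ ?_ ?_ ?_ ?_ ?_ ?_ ?_ ?_ ?_ h
  · exact fun {σ e} => caseD1
  · exact fun h _ ih => caseD2 h ih
  · exact fun h _ ih => caseD3 h ih
  · exact caseJ1
  · exact fun _ _ ihJ ihD => caseJ2 ihJ ihD
  · exact fun _ hW _ ih1 ihW ih2 => caseJ3 hW ih1 ihW ih2
  · exact caseW1
  · exact fun hx _ ih => caseW2 hx ih
  · exact fun hx _ _ _ _ _ => caseW3 hx
  · exact fun hx _ _ _ _ => caseW3 hx
  · exact fun _ _ ih1 ih2 => caseW5 ih1 ih2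

theorem step_preserve {P0 : Set (Env × Tm)} (hS : SimpleP P0)
    {t t' : Tm} (h : StepE EqImp t t') :
    t.preds ⊆ P0 → (∀ s ∈ t.stacks, (s.map pr).Nodup) →
    t'.preds ⊆ P0 ∧ ∀ s ∈ t'.stacks, (s.map pr).Nodup := by
  induction h with
  | @beta x T e v _ =>
      intro h1 h2
      simp only [Tm.preds, Tm.stacks, Set.union_subset_iff] at h1 ⊢
      have hSe : SimpleP e.preds := hS.mono h1.1
      constructor
      · exact (tm_subst_preds x v e hSe).trans (Set.union_subset h1.1 h1.2)
      · intro s hs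
        rcases tm_subst_stacks x v e hSe hs with hs | hs
        · exact h2 s (Or.inl hs)
        · exact h2 s (Or.inr hs)
  | @fix x T e =>
      intro h1 h2
      simp only [Tm.preds, Tm.stacks] at h1 h2 ⊢
      have hSe : SimpleP e.preds := hS.mono h1
      constructor
      · exact (tm_subst_preds x _ e hSe).trans (Set.union_subset h1 h1)
      · intro s hs
        rcases tm_subst_stacks x _ e hSe hs with hs | hs <;> exact h2 s hs
  | iteTrue =>
      intro h1 h2
      simp only [Tm.preds, Tm.stacks, Set.union_subset_iff] at h1 ⊢
      exact ⟨h1.1.2, fun s hs => h2 s (Or.inl (Or.inr hs))⟩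
  | iteFalse =>
      intro h1 h2
      simp only [Tm.preds, Tm.stacks, Set.union_subset_iff] at h1 ⊢
      exact ⟨h1.2, fun s hs => h2 s (Or.inr hs)⟩
  | appL _ ih =>
      intro h1 h2
      simp only [Tm.preds, Tm.stacks, Set.union_subset_iff] at h1 ⊢
      obtain ⟨ha, hb⟩ := ih h1.1 (fun s hs => h2 s (Or.inl hs))
      refine ⟨⟨ha, h1.2⟩, ?_⟩
      intro s hs
      rcases hs with hs | hs
      · exact hb s hs
      · exact h2 s (Or.inr hs)
  | appR _ _ ih =>
      intro h1 h2
      simp only [Tm.preds, Tm.stacks, Set.union_subset_iff] at h1 ⊢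
      obtain ⟨ha, hb⟩ := ih h1.2 (fun s hs => h2 s (Or.inr hs))
      refine ⟨⟨h1.1, ha⟩, ?_⟩
      intro s hs
      rcases hs with hs | hs
      · exact h2 s (Or.inl hs)
      · exact hb s hs
  | ite _ ih =>
      intro h1 h2
      simp only [Tm.preds, Tm.stacks, Set.union_subset_iff] at h1 ⊢
      obtain ⟨ha, hb⟩ := ih h1.1.1 (fun s hs => h2 s (Or.inl (Or.inl hs)))
      refine ⟨⟨⟨ha, h1.1.2⟩, h1.2⟩, ?_⟩
      intro s hs
      rcases hs with (hs | hs) | hs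
      · exact hb s hs
      · exact h2 s (Or.inl (Or.inr hs))
      · exact h2 s (Or.inr hs)
  | appLRaise => intro _ _; simp [Tm.preds, Tm.stacks]
  | appRRaise => intro _ _; simp [Tm.preds, Tm.stacks]
  | iteRaise => intro _ _; simp [Tm.preds, Tm.stacks]
  | @monLabel l C e =>
      intro h1 h2
      simp only [Tm.preds, Tm.stacks, Set.union_subset_iff] at h1 ⊢
      refine ⟨⟨by rw [label_preds]; exact h1.1, h1.2⟩, ?_⟩
      intro s hs
      rcases hs with hs | hs
      · rcases label_stacks l C s hs with hs | hs
        · exact h2 s (Or.inl hs)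
        · exact hs
      · exact h2 s (Or.inr hs)
  | monCNil =>
      intro h1 h2
      simp only [Tm.preds, Tm.stacks, Set.union_subset_iff] at h1 ⊢
      exact ⟨h1.2, fun s hs => h2 s (Or.inr hs)⟩
  | @monCPred l σ e r v _ =>
      intro h1 h2
      have hpair : (σ, e) ∈ P0 := by
        apply h1
        simp only [Tm.preds, LCtr.preds, Set.mem_union, Set.mem_singleton_iff]
        tauto
      have hid := (hS _ hpair).1
      subst hid
      rw [env_apply_id]
      simp only [Tm.preds, Tm.stacks, LCtr.preds, LCtr.stacks,
        Set.union_subset_iff] at h1 ⊢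
      obtain ⟨⟨⟨⟨_, hpe⟩, hps⟩, hpr⟩, hpv⟩ := h1
      refine ⟨⟨⟨⟨hpe, hpv⟩, hpr, hpv⟩, by simp [Tm.preds]⟩, ?_⟩
      intro s hs
      rcases hs with ((hs | hs) | (hs | hs)) | hs
      · exact h2 s (Or.inl (Or.inl (Or.inr hs)))
      · exact h2 s (Or.inr hs)
      · exact h2 s (Or.inl (Or.inr hs))
      · exact h2 s (Or.inr hs)
      · simp [Tm.stacks] at hs
  | @monCApp x c₁ c₂ v₁ v₂ _ _ =>
      intro h1 h2
      simp only [Tm.preds, Tm.stacks, LCtr.preds, LCtr.stacks,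
        Set.union_subset_iff] at h1 ⊢
      obtain ⟨⟨⟨hc₁, hc₂⟩, hv₁⟩, hv₂⟩ := h1
      rw [lctr_subst_id x v₂ c₂ (hS.mono hc₂)]
      refine ⟨⟨hc₂, hv₁, hc₁, hv₂⟩, ?_⟩
      intro s hs
      rcases hs with hs | (hs | (hs | hs))
      · exact h2 s (Or.inl (Or.inl (Or.inr hs)))
      · exact h2 s (Or.inl (Or.inr hs))
      · exact h2 s (Or.inl (Or.inl (Or.inl hs)))
      · exact h2 s (Or.inr hs)
  | monC _ _ ih =>
      intro h1 h2
      simp only [Tm.preds, Tm.stacks, Set.union_subset_iff] at h1 ⊢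
      obtain ⟨ha, hb⟩ := ih h1.2 (fun s hs => h2 s (Or.inr hs))
      refine ⟨⟨h1.1, ha⟩, ?_⟩
      intro s hs
      rcases hs with hs | hs
      · exact h2 s (Or.inl hs)
      · exact hb s hs
  | @monCJoin c₁ c₂ c₃ e hJ =>
      intro h1 h2
      simp only [Tm.preds, Tm.stacks, Set.union_subset_iff] at h1 ⊢
      obtain ⟨hc₂, hc₁, he⟩ := h1
      obtain ⟨jp, _, j2⟩ := join_main hJ (hS.mono (Set.union_subset hc₁ hc₂))
      refine ⟨⟨jp.trans (Set.union_subset hc₁ hc₂), he⟩, ?_⟩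
      intro s hs
      rcases hs with hs | hs
      · exact j2 (fun s hs => h2 s (Or.inr (Or.inl hs)))
          (fun s hs => h2 s (Or.inl hs)) s hs
      · exact h2 s (Or.inr (Or.inr hs))
  | monCRaise => intro _ _; simp [Tm.preds, Tm.stacks]
/-- Constant space bound for simple contracts: starting from a well-typed
    source program using simple contracts whose (finitely many) predicates
    number `P = (Tm.preds e).ncard`, and whose predicate stacks are all
    irredundant (duplicate-free, taking syntactic equality as the
    implication relation), every predicate stack of every term reachable
    by the space-efficient reduction has length at most `P`. -/
theorem stack_length_bound
    {e e' : Tm} {T : Ty}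
    (hty : HasTy [] e T)
    (hsimple : Simple e)
    (hfin : (Tm.preds e).Finite)
    (hirr : ∀ s ∈ Tm.stacks e, (s.map (fun t => (t.2.1, t.2.2))).Nodup)
    (hreach : Relation.ReflTransGen (StepE EqImp) e e') :
    ∀ s ∈ Tm.stacks e', s.length ≤ (Tm.preds e).ncard := by
  classical
  have hS : SimpleP (Tm.preds e) := hsimple
  have hinv : e'.preds ⊆ e.preds ∧ ∀ s ∈ e'.stacks, (s.map pr).Nodup := by
    induction hreach with
    | refl => exact ⟨le_refl _, hirr⟩
    | tail _ hstep ih => exact step_preserve hS hstep ih.1 ih.2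
  intro s hs
  have hnd : (s.map pr).Nodup := hinv.2 s hs
  have hsub : ((s.map pr).toFinset : Set (Env × Tm)) ⊆ Tm.preds e := by
    intro a ha
    simp only [List.coe_toFinset, Set.mem_setOf_eq, List.mem_map] at ha
    obtain ⟨b, hb, rfl⟩ := ha
    exact hinv.1 (tm_stacks_preds e' s hs b hb)
  have hlen : (s.map pr).toFinset.card = s.length := by
    rw [List.toFinset_card_of_nodup hnd, List.length_map]
  calc s.length = ((s.map pr).toFinset : Set (Env × Tm)).ncard := by
        rw [Set.ncard_coe_finset, hlen]
    _ ≤ (Tm.preds e).ncard := Set.ncard_le_ncard hsub hfin
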